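/- (Lemma 2, non-interleaving) Let S₁ and S₂ be distinct strings over Σ, each of length at least 2, and each having at least one LMS-suffix occurrence in T. Then either suffix(p) ≺ suffix(q) for every LMS-suffix occurrence p of S₁ and every LMS-suffix occurrence q of S₂, or suffix(q) ≺ suffix(p) for every such p and q. In other words, the lexicographic order of the suffixes of T never interleaves suffixes starting at LMS-suffix occurrences of two different strings, even though the set of such strings is not prefix-free. -/
import Mathlib


/-- Auxiliary S-type classification with explicit fuel `n - i`. -/
def STypeAux {α : Type*} [LinearOrder α] (T : ℕ → α) : ℕ → ℕ → Prop
  | 0, _ => True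
  | k + 1, i => T i < T (i + 1) ∨ (T i = T (i + 1) ∧ STypeAux T k (i + 1))

/-- Position `i` of `T[1..n]` is S-type. -/
def SType {α : Type*} [LinearOrder α] (T : ℕ → α) (n i : ℕ) : Prop :=
  STypeAux T (n - i) i

/-- Auxiliary L-type classification with explicit fuel `n - i`. -/
def LTypeAux {α : Type*} [LinearOrder α] (T : ℕ → α) : ℕ → ℕ → Prop
  | 0, _ => False
  | k + 1, i => T (i + 1) < T i ∨ (T i = T (i + 1) ∧ LTypeAux T k (i + 1))

/-- Position `i` of `T[1..n]` is L-type. -/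
def LType {α : Type*} [LinearOrder α] (T : ℕ → α) (n i : ℕ) : Prop :=
  LTypeAux T (n - i) i

/-- Position `i` of `T[1..n]` is LMS-type. -/
def LMSType {α : Type*} [LinearOrder α] (T : ℕ → α) (n i : ℕ) : Prop :=
  1 < i ∧ SType T n i ∧ LType T n (i - 1)

/-- `suf T n i` is the suffix `T[i..n]` of `T[1..n]` as a list. -/
def suf {α : Type*} (T : ℕ → α) (n i : ℕ) : List α :=
  (List.range (n + 1 - i)).map fun k => T (i + k)

/-- rank of suffix p among all suffixes of T[1..n]. -/
noncomputable def rnk {α : Type*} [LinearOrder α] (T : ℕ → α) (n p : ℕ) : ℕ :=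
  1 + Set.ncard {q : ℕ | 1 ≤ q ∧ q ≤ n ∧ List.Lex (· < ·) (suf T n q) (suf T n p)}

/-- `p` is an LMS-suffix occurrence of string `S` (|S| ≥ 2) in `T[1..n]`. -/
def IsLMSSuffixOcc {α : Type*} [LinearOrder α] (T : ℕ → α) (n : ℕ) (S : List α) (p : ℕ) : Prop :=
  1 ≤ p ∧ p + S.length - 1 ≤ n ∧
    ((List.range S.length).map fun k => T (p + k)) = S ∧
    LMSType T n (p + S.length - 1) ∧
    ∀ k, p < k → k < p + S.length - 1 → ¬ LMSType T n k

section helpers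
variable {α : Type*} [LinearOrder α] {T : ℕ → α} {n i j : ℕ}

lemma LType_lt (h : LType T n i) : i < n := by
  by_contra hc
  push_neg at hc
  have h0 : n - i = 0 := Nat.sub_eq_zero_of_le hc
  rw [LType, h0] at h
  exact h

lemma SType_last : SType T n n := by
  rw [SType, Nat.sub_self]
  trivial

lemma SType_iff (h : i < n) :
    SType T n i ↔ (T i < T (i + 1) ∨ (T i = T (i + 1) ∧ SType T n (i + 1))) := by
  have h1 : n - i = (n - (i + 1)) + 1 := by omega
  rw [SType, h1, SType]
  exact Iff.rfl

lemma LType_iff (h : i < n) :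
    LType T n i ↔ (T (i + 1) < T i ∨ (T i = T (i + 1) ∧ LType T n (i + 1))) := by
  have h1 : n - i = (n - (i + 1)) + 1 := by omega
  rw [LType, h1, LType]
  exact Iff.rfl

lemma SL_not : ∀ m i, n - i ≤ m → SType T n i → LType T n i → False := by
  intro m
  induction m with
  | zero =>
    intro i hm _ hL
    have := LType_lt hL
    omega
  | succ m ih =>
    intro i hm hS hL
    have hin := LType_lt hL
    rw [SType_iff hin] at hS
    rw [LType_iff hin] at hL
    rcases hS with h1 | ⟨h1, hS'⟩ <;> rcases hL with h2 | ⟨h2, hL'⟩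
    · exact absurd h1 (not_lt_of_gt h2)
    · exact absurd h2 h1.ne
    · exact absurd h1 h2.ne'
    · exact ih (i + 1) (by omega) hS' hL'

lemma notS_L : ∀ m i, n - i ≤ m → i ≤ n → ¬ SType T n i → LType T n i := by
  intro m
  induction m with
  | zero =>
    intro i hm hin hS
    have : i = n := by omega
    subst this
    exact absurd SType_last hS
  | succ m ih =>
    intro i hm hin hS
    rcases eq_or_lt_of_le hin with rfl | hlt
    · exact absurd SType_last hS
    rw [SType_iff hlt] at hS
    push_neg at hS
    rw [LType_iff hlt]
    rcases lt_trichotomy (T i) (T (i + 1)) with h | h | h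
    · exact absurd h (not_lt_of_ge hS.1)
    · exact Or.inr ⟨h, ih (i + 1) (by omega) (by omega) (hS.2 h)⟩
    · exact Or.inl h

lemma suf_cons (h : i ≤ n) : suf T n i = T i :: suf T n (i + 1) := by
  have h1 : n + 1 - i = (n + 1 - (i + 1)) + 1 := by omega
  rw [suf, h1, List.range_succ_eq_map, List.map_cons, List.map_map, suf]
  congr 1
  apply List.map_congr_left
  intro a _
  simp only [Function.comp_apply, Nat.succ_eq_add_one]
  congr 1
  omega

lemma suf_split (m : ℕ) (h : i + m ≤ n + 1) :
    suf T n i = ((List.range m).map fun k => T (i + k)) ++ suf T n (i + m) := by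
  have h1 : n + 1 - i = m + (n + 1 - (i + m)) := by omega
  rw [suf, h1, List.range_add, List.map_append, List.map_map, suf]
  congr 1
  apply List.map_congr_left
  intro a _
  simp only [Function.comp_apply]
  congr 1
  omega

lemma lex_append {r : α → α → Prop} (c : List α) {a b : List α}
    (h : List.Lex r a b) : List.Lex r (c ++ a) (c ++ b) := by
  induction c with
  | nil => exact h
  | cons x c ih => exact List.Lex.cons ih

/-- core type lemma: S-type suffix beats L-type suffix with the same head char -/
lemma typeLemma (sent : α) (hTn : T n = sent)
    (hT : ∀ i, 1 ≤ i → i < n → T i ≠ sent) :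
    ∀ m i j, n - i + (n - j) ≤ m → i ≤ n → 1 ≤ j →
      SType T n i → LType T n j → T i = T j →
      List.Lex (· < ·) (suf T n j) (suf T n i) := by
  intro m
  induction m with
  | zero =>
    intro i j hm _ _ _ hL _
    have := LType_lt hL
    omega
  | succ m ih =>
    intro i j hm hin hj1 hS hL hij
    have hjn : j < n := LType_lt hL
    have hiln : i < n := by
      rcases eq_or_lt_of_le hin with rfl | h
      · exact absurd (hij ▸ hTn : T j = sent) (hT j hj1 hjn)
      · exact h
    have hS' := (SType_iff hiln).1 hS
    have hL' := (LType_iff hjn).1 hL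
    have hile : T i ≤ T (i + 1) := by
      rcases hS' with h | ⟨h, _⟩
      · exact h.le
      · exact h.le
    rw [suf_cons hiln.le, suf_cons hjn.le, hij]
    apply List.Lex.cons
    rcases hL' with h | ⟨heq, hL2⟩
    · -- T (j+1) < T j = T i ≤ T (i+1)
      rw [suf_cons (by omega : i + 1 ≤ n), suf_cons (by omega : j + 1 ≤ n)]
      exact List.Lex.rel (lt_of_lt_of_le (h.trans_le (hij.ge.trans hile)) le_rfl)
    · rcases hS' with h2 | ⟨heq2, hS2⟩
      · rw [suf_cons (by omega : i + 1 ≤ n), suf_cons (by omega : j + 1 ≤ n)]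
        exact List.Lex.rel (by rw [← heq, ← hij]; exact h2)
      · exact ih (i + 1) (j + 1) (by omega) (by omega) (by omega) hS2 hL2
          (by rw [← heq2, ← heq, hij])

lemma occ_char {S : List α} {p : ℕ} (h : IsLMSSuffixOcc T n S p) :
    ∀ k (hk : k < S.length), T (p + k) = S[k] := by
  intro k hk
  have h2 := congrArg (fun l => l[k]?) h.2.2.1
  simp only [List.getElem?_map, List.getElem?_range, hk, if_pos, List.getElem?_eq_getElem hk,
    Option.map_some] at h2
  have hk' : k < (List.range S.length).length := by simpa using hk
  simpa using h2

lemma list_tri : ∀ (a b : List α), a ≠ b →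
    a <+: b ∨ b <+: a ∨
      ∃ j, ∃ (h1 : j < a.length) (h2 : j < b.length),
        (∀ k, k < j → a[k]? = b[k]?) ∧ a[j] ≠ b[j] := by
  intro a
  induction a with
  | nil => intro b _; exact Or.inl (List.nil_prefix)
  | cons x a ih =>
    intro b hne
    match b with
    | [] => exact Or.inr (Or.inl (List.nil_prefix))
    | y :: b =>
      by_cases hxy : x = y
      · subst hxy
        have hne' : a ≠ b := fun h => hne (by rw [h])
        rcases ih b hne' with h | h | ⟨j, h1, h2, hag, hne2⟩
        · exact Or.inl (by obtain ⟨t, ht⟩ := h; exact ⟨t, by simp [← ht]⟩)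
        · exact Or.inr (Or.inl (by obtain ⟨t, ht⟩ := h; exact ⟨t, by simp [← ht]⟩))
        · refine Or.inr (Or.inr ⟨j + 1, by simpa using h1, by simpa using h2, ?_, by simpa using hne2⟩)
          intro k hk
          match k with
          | 0 => simp
          | k + 1 => simpa using hag k (by omega)
      · exact Or.inr (Or.inr ⟨0, by simp, by simp, by omega, by simpa using hxy⟩)

end helpers

section main
variable {α : Type*} [LinearOrder α] {T : ℕ → α} {n : ℕ}

lemma prefix_case (sent : α) (hTn : T n = sent)
    (hT : ∀ i, 1 ≤ i → i < n → T i ≠ sent)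
    {S₁ S₂ : List α} (hpre : S₁ <+: S₂) (hL : S₁.length < S₂.length) (h1 : 2 ≤ S₁.length)
    {p q : ℕ} (hp : IsLMSSuffixOcc T n S₁ p) (hq : IsLMSSuffixOcc T n S₂ q) :
    List.Lex (· < ·) (suf T n q) (suf T n p) := by
  set L₁ := S₁.length with hl1def
  set L₂ := S₂.length with hl2def
  have hp1 := hp.1
  have hp2 := hp.2.1
  have hpLMS := hp.2.2.2.1
  have hq1 := hq.1
  have hq2 := hq.2.1
  have hqno := hq.2.2.2.2
  have hchar : ∀ k, k < L₁ → T (q + k) = T (p + k) := by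
    intro k hk
    rw [occ_char hq k (by omega), occ_char hp k hk]
    exact (hpre.getElem hk).symm
  set e := p + (L₁ - 1) with he
  set f := q + (L₁ - 1) with hf
  have hpe : p + L₁ - 1 = e := by omega
  have heLMS : LMSType T n e := by rwa [hpe] at hpLMS
  obtain ⟨he1, hSe, hLe⟩ := heLMS
  have hen : e ≤ n := by omega
  have hfn : f < n := by omega
  have he1n : e - 1 < n := by omega
  have hgt : T e < T (e - 1) := by
    rcases (LType_iff he1n).1 hLe with h | ⟨h, hL2⟩
    · rwa [show e - 1 + 1 = e by omega] at h
    · rw [show e - 1 + 1 = e by omega] at hL2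
      exact (SL_not (n - e) e le_rfl hSe hL2).elim
  have hfe : T f = T e := hchar (L₁ - 1) (by omega)
  have hfe1 : T (f - 1) = T (e - 1) := by
    have h := hchar (L₁ - 2) (by omega)
    rwa [show q + (L₁ - 2) = f - 1 by omega, show p + (L₁ - 2) = e - 1 by omega] at h
  have hgtf : T f < T (f - 1) := by rw [hfe, hfe1]; exact hgt
  have hLf1 : LType T n (f - 1) := by
    rw [LType_iff (by omega : f - 1 < n)]
    left
    rwa [show f - 1 + 1 = f by omega]
  have hnoLMSf : ¬ LMSType T n f := hqno f (by omega) (by omega)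
  have hSf : ¬ SType T n f := fun hs => hnoLMSf ⟨by omega, hs, hLf1⟩
  have hLf : LType T n f := notS_L (n - f) f le_rfl (by omega) hSf
  have key : List.Lex (· < ·) (suf T n f) (suf T n e) :=
    typeLemma sent hTn hT (n - e + (n - f)) e f le_rfl hen (by omega) hSe hLf hfe.symm
  have hsp : suf T n p = ((List.range (L₁ - 1)).map fun k => T (p + k)) ++ suf T n e := by
    rw [he]; exact suf_split (L₁ - 1) (by omega)
  have hsq : suf T n q = ((List.range (L₁ - 1)).map fun k => T (q + k)) ++ suf T n f := by
    rw [hf]; exact suf_split (L₁ - 1) (by omega)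
  have hCC : ((List.range (L₁ - 1)).map fun k => T (q + k))
      = ((List.range (L₁ - 1)).map fun k => T (p + k)) := by
    apply List.map_congr_left
    intro a ha
    simp only [List.mem_range] at ha
    exact hchar a (by omega)
  rw [hsp, hsq, hCC]
  exact lex_append _ key

lemma mismatch_case {S₁ S₂ : List α} {j : ℕ}
    (h1 : j < S₁.length) (h2 : j < S₂.length)
    (hag : ∀ k, k < j → S₁[k]? = S₂[k]?) (hlt : S₁[j] < S₂[j])
    {p q : ℕ} (hp : IsLMSSuffixOcc T n S₁ p) (hq : IsLMSSuffixOcc T n S₂ q) :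
    List.Lex (· < ·) (suf T n p) (suf T n q) := by
  set L₁ := S₁.length with hl1def
  set L₂ := S₂.length with hl2def
  have hp2 := hp.2.1
  have hq2 := hq.2.1
  have hpj : p + j ≤ n := by omega
  have hqj : q + j ≤ n := by omega
  have hsp : suf T n p = ((List.range j).map fun k => T (p + k)) ++ suf T n (p + j) :=
    suf_split j (by omega)
  have hsq : suf T n q = ((List.range j).map fun k => T (q + k)) ++ suf T n (q + j) :=
    suf_split j (by omega)
  have hCC : ((List.range j).map fun k => T (p + k))
      = ((List.range j).map fun k => T (q + k)) := by
    apply List.map_congr_left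
    intro a ha
    simp only [List.mem_range] at ha
    have := hag a ha
    rw [List.getElem?_eq_getElem (by omega : a < S₁.length),
      List.getElem?_eq_getElem (by omega : a < S₂.length)] at this
    rw [occ_char hp a (by omega), occ_char hq a (by omega)]
    exact Option.some_injective _ this
  rw [hsp, hsq, hCC]
  apply lex_append
  rw [suf_cons hpj, suf_cons hqj]
  apply List.Lex.rel
  rw [occ_char hp j h1, occ_char hq j h2]
  exact hlt

end main

/-- Lemma 2, non-interleaving: for distinct strings `S₁ ≠ S₂` of
length ≥ 2, each with at least one LMS-suffix occurrence in `T`, the suffixes of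
`T` starting at LMS-suffix occurrences of `S₁` and of `S₂` do not interleave in
lexicographic order. -/
theorem stmt10 {α : Type*} [LinearOrder α] (T : ℕ → α) (n : ℕ) (sent : α)
    (hn : 2 ≤ n) (hTn : T n = sent)
    (hsent : ∀ a : α, a ≠ sent → sent < a)
    (hT : ∀ i, 1 ≤ i → i < n → T i ≠ sent) :
    ∀ S₁ S₂ : List α, S₁ ≠ S₂ → 2 ≤ S₁.length → 2 ≤ S₂.length →
      (∃ p, IsLMSSuffixOcc T n S₁ p) → (∃ q, IsLMSSuffixOcc T n S₂ q) →
      (∀ p q, IsLMSSuffixOcc T n S₁ p → IsLMSSuffixOcc T n S₂ q →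
          List.Lex (· < ·) (suf T n p) (suf T n q)) ∨
      (∀ p q, IsLMSSuffixOcc T n S₁ p → IsLMSSuffixOcc T n S₂ q →
          List.Lex (· < ·) (suf T n q) (suf T n p)) := by
  intro S₁ S₂ hne h1 h2 _ _
  rcases list_tri S₁ S₂ hne with hpre | hpre | ⟨j, hj1, hj2, hag, hne2⟩
  · right
    intro p q hp hq
    exact prefix_case sent hTn hT hpre
      (lt_of_le_of_ne hpre.length_le fun h => hne (hpre.eq_of_length h)) h1 hp hq
  · left
    intro p q hp hq
    exact prefix_case sent hTn hT hpre
      (lt_of_le_of_ne hpre.length_le fun h => hne.symm (hpre.eq_of_length h)) h2 hq hp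
  · rcases lt_or_gt_of_ne hne2 with hlt | hlt
    · left
      intro p q hp hq
      exact mismatch_case hj1 hj2 hag hlt hp hq
    · right
      intro p q hp hq
      exact mismatch_case hj2 hj1 (fun k hk => (hag k hk).symm) hlt hq hp
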